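/- arXiv:1208.5203 — 2 statements merged into one kernel-verified Lean document; each statement's English description precedes it below -/
import Mathlib

section
/- Let M, N_obs, N_inc be positive natural numbers, let z_1,…,z_M ∈ ℝ², let k₋ > 0, let Φ^obs_1,…,Φ^obs_{N_obs} ∈ ℂ and Φ^inc_1,…,Φ^inc_{N_inc} ∈ ℂ, let p_1,…,p_{N_obs} ∈ ℂ² and q_1,…,q_{N_inc} ∈ ℂ², and let a_1,…,a_M, b_1,…,b_M ∈ ℂ. Define the N_obs × N_inc complex matrix 𝕂 entrywise by K_{jl} = Φ^obs_j Φ^inc_l · Σ_{m=1}^{M} ( a_m + b_m (p_j ⋅ q_l) ) · exp( −i k₋ (p_j − q_l) ⋅ z_m ), where ⋅ denotes the bilinear dot product u ⋅ v = u₁v₁ + u₂v₂ extended to complex arguments. Then 𝕂 factorizes as 𝕂 = 𝔻 𝔼 ℍ^T, where: 𝔻 is the N_obs × 3M matrix whose m-th column (1 ≤ m ≤ M) has j-th entry Φ^obs_j exp(−i k₋ p_j ⋅ z_m) and whose (M + 2(m−1) + s)-th column (s = 1, 2) has j-th entry (p_j)_s Φ^obs_j exp(−i k₋ p_j ⋅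 z_m); ℍ is the N_inc × 3M matrix whose m-th column has l-th entry Φ^inc_l exp(i k₋ q_l ⋅ z_m) and whose (M + 2(m−1) + s)-th column has l-th entry (q_l)_s Φ^inc_l exp(i k₋ q_l ⋅ z_m); and 𝔼 is the 3M × 3M diagonal matrix whose first M diagonal entries are a_1,…,a_M and whose remaining diagonal entries are b_1, b_1, b_2, b_2, …, b_M, b_M. -/
/-! Each scatterer contributes a rank-three term: the phase splits as
`exp (-i k p⋅z) * exp (i k q⋅z)`, and `p⋅q = p₁ q₁ + p₂ q₂` splits the permeability part
into two rank-one pieces. -/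

open Complex Matrix

/-- Bilinear (non-Hermitian) dot product on `ℂ²`. -/
def cdot (u v : ℂ × ℂ) : ℂ := u.1 * v.1 + u.2 * v.2

/-- Coercion of a real planar point to `ℂ²`. -/
def toC2 (z : ℝ × ℝ) : ℂ × ℂ := ((z.1 : ℂ), (z.2 : ℂ))

/-- The `s`-th component (s = 1, 2) of a vector in `ℂ²`. -/
def comp (u : ℂ × ℂ) : Fin 2 → ℂ := ![u.1, u.2]

theorem cdot_sub_left (u v w : ℂ × ℂ) : cdot (u - v) w = cdot u w - cdot v w := by
  simp only [cdot, Prod.fst_sub, Prod.snd_sub]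
  ring

theorem cdot_eq_sum_comp (u v : ℂ × ℂ) : cdot u v = ∑ s, _root_.comp u s * _root_.comp v s := by
  simp [cdot, _root_.comp, Fin.sum_univ_two]

theorem exp_neg_I_mul_cdot_sub (k : ℝ) (u v w : ℂ × ℂ) :
    exp (-I * k * cdot (u - v) w) = exp (-I * k * cdot u w) * exp (I * k * cdot v w) := by
  rw [← exp_add, cdot_sub_left]
  ring_nf

theorem Matrix.mul_diagonal_mul_transpose_apply {m n ι α : Type*} [Fintype ι] [DecidableEq ι]
    [NonUnitalNonAssocSemiring α] (A : Matrix m ι α) (d : ι → α) (B : Matrix n ι α)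
    (i : m) (j : n) : (A * diagonal d * Bᵀ) i j = ∑ k, A i k * d k * B j k := by
  simp only [mul_apply (M := A * diagonal d), mul_diagonal, transpose_apply]

theorem msr_factorization_general
    (M Nobs Ninc : ℕ)
    (z : Fin M → ℝ × ℝ) (km : ℝ)
    (Φobs : Fin Nobs → ℂ) (Φinc : Fin Ninc → ℂ)
    (p : Fin Nobs → ℂ × ℂ) (q : Fin Ninc → ℂ × ℂ)
    (a b : Fin M → ℂ)
    (K : Matrix (Fin Nobs) (Fin Ninc) ℂ)
    (hK : K = Matrix.of fun j l =>
      Φobs j * Φinc l *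
        ∑ m : Fin M, (a m + b m * cdot (p j) (q l)) *
          Complex.exp (-Complex.I * km * cdot (p j - q l) (toC2 (z m))))
    (D : Matrix (Fin Nobs) (Fin M ⊕ Fin M × Fin 2) ℂ)
    (hD : D = Matrix.of fun j idx =>
      Sum.elim
        (fun m => Φobs j * Complex.exp (-Complex.I * km * cdot (p j) (toC2 (z m))))
        (fun ms => comp (p j) ms.2 * Φobs j *
          Complex.exp (-Complex.I * km * cdot (p j) (toC2 (z ms.1)))) idx)
    (H : Matrix (Fin Ninc) (Fin M ⊕ Fin M × Fin 2) ℂ)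
    (hH : H = Matrix.of fun l idx =>
      Sum.elim
        (fun m => Φinc l * Complex.exp (Complex.I * km * cdot (q l) (toC2 (z m))))
        (fun ms => comp (q l) ms.2 * Φinc l *
          Complex.exp (Complex.I * km * cdot (q l) (toC2 (z ms.1)))) idx)
    (E : Matrix (Fin M ⊕ Fin M × Fin 2) (Fin M ⊕ Fin M × Fin 2) ℂ)
    (hE : E = Matrix.diagonal (Sum.elim a (fun ms => b ms.1))) :
    K = D * E * Hᵀ := by
  subst hK hD hH hE
  ext j l
  simp only [mul_diagonal_mul_transpose_apply, of_apply, Fintype.sum_sum_type,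
    Fintype.sum_prod_type, Sum.elim_inl, Sum.elim_inr, Finset.mul_sum, ← Finset.sum_add_distrib]
  refine Finset.sum_congr rfl fun m _ => ?_
  rw [exp_neg_I_mul_cdot_sub, cdot_eq_sum_comp (p j) (q l), Fin.sum_univ_two, Fin.sum_univ_two]
  ring

/-- **Factorization of the Multi-Static Response matrix.**
The MSR matrix `K` with entries
`K j l = Φobs j * Φinc l * ∑ m, (a m + b m * (p j ⋅ q l)) * exp (-i k₋ (p j - q l) ⋅ z m)`
factorizes as `K = D * E * Hᵀ`, where the `3M` columns of `D` and `H` are indexed by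
`Fin M ⊕ Fin M × Fin 2` (the first `M` columns being the "permittivity" columns and the
column `(m, s)` being the `(M + 2(m-1) + s)`-th, "permeability", column), and `E` is the
diagonal matrix whose first `M` diagonal entries are `a m` and whose remaining diagonal
entries are `b 1, b 1, b 2, b 2, …, b M, b M`. -/
theorem msr_factorization
    (M Nobs Ninc : ℕ) (hM : 0 < M) (hNobs : 0 < Nobs) (hNinc : 0 < Ninc)
    (z : Fin M → ℝ × ℝ) (km : ℝ) (hkm : 0 < km)
    (Φobs : Fin Nobs → ℂ) (Φinc : Fin Ninc → ℂ)
    (p : Fin Nobs → ℂ × ℂ) (q : Fin Ninc → ℂ × ℂ)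
    (a b : Fin M → ℂ)
    (K : Matrix (Fin Nobs) (Fin Ninc) ℂ)
    (hK : K = Matrix.of fun j l =>
      Φobs j * Φinc l *
        ∑ m : Fin M, (a m + b m * cdot (p j) (q l)) *
          Complex.exp (-Complex.I * km * cdot (p j - q l) (toC2 (z m))))
    (D : Matrix (Fin Nobs) (Fin M ⊕ Fin M × Fin 2) ℂ)
    (hD : D = Matrix.of fun j idx =>
      Sum.elim
        (fun m => Φobs j * Complex.exp (-Complex.I * km * cdot (p j) (toC2 (z m))))
        (fun ms => comp (p j) ms.2 * Φobs j *
          Complex.exp (-Complex.I * km * cdot (p j) (toC2 (z ms.1)))) idx)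
    (H : Matrix (Fin Ninc) (Fin M ⊕ Fin M × Fin 2) ℂ)
    (hH : H = Matrix.of fun l idx =>
      Sum.elim
        (fun m => Φinc l * Complex.exp (Complex.I * km * cdot (q l) (toC2 (z m))))
        (fun ms => comp (q l) ms.2 * Φinc l *
          Complex.exp (Complex.I * km * cdot (q l) (toC2 (z ms.1)))) idx)
    (E : Matrix (Fin M ⊕ Fin M × Fin 2) (Fin M ⊕ Fin M × Fin 2) ℂ)
    (hE : E = Matrix.diagonal (Sum.elim a (fun ms => b ms.1))) :
    K = D * E * Hᵀ :=
  msr_factorization_general M Nobs Ninc z km Φobs Φinc p q a b K hK D hD H hH E hE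
end

section
/- With the matrices of the MSR factorization: if 𝕂 = 𝔻 𝔼 ℍ^T where 𝔻 is an N_obs × 3M complex matrix, 𝔼 is a 3M × 3M complex matrix, and ℍ is an N_inc × 3M complex matrix, then the rank of 𝕂 is at most 3M. In particular, the N_obs × N_inc MSR matrix with entries K_{jl} = Φ^obs_j Φ^inc_l Σ_{m=1}^{M} ( a_m + b_m (p_j ⋅ q_l) ) exp( −i k₋ (p_j − q_l) ⋅ z_m ) has rank at most 3M, so it has at most 3M nonzero singular values. -/
/-!
Each summand separates into three products of a function of `p` and a function of `q`:
`(a + b (p ⋅ q)) e^{-ik(p - q)⋅z} = (a e^{-ikp⋅z}) e^{ikq⋅z} + (b p₁ e^{-ikp⋅z}) (q₁ e^{ikq⋅z})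
+ (b p₂ e^{-ikp⋅z}) (q₂ e^{ikq⋅z})`. So the MSR matrix is a product `D Hᵀ` with inner dimension
`3M`, and any such product has rank at most its inner dimension.
-/

open Complex Matrix

theorem Matrix.rank_mul_le_card_inner {m n o R : Type*} [Fintype n] [Fintype o] [CommSemiring R]
    [StrongRankCondition R] (A : Matrix m n R) (B : Matrix n o R) :
    (A * B).rank ≤ Fintype.card n :=
  (A.rank_mul_le_left B).trans A.rank_le_card_width

theorem msr_summand_eq_sum (a b k : ℂ) (p q w : ℂ × ℂ) :
    (a + b * cdot p q) * exp (-I * k * cdot (p - q) w) =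
      ∑ i : Fin 3, (exp (-I * k * cdot p w) * ![a, b * p.1, b * p.2] i) *
        (exp (I * k * cdot q w) * ![1, q.1, q.2] i) := by
  have hexp :
      exp (-I * k * cdot (p - q) w) = exp (-I * k * cdot p w) * exp (I * k * cdot q w) := by
    rw [← exp_add, cdot_sub_left]
    ring_nf
  rw [hexp]
  simp only [Fin.sum_univ_three, cons_val, cdot]
  ring

section Factorization

variable {ι κ μ : Type*} [Fintype μ]

noncomputable def msrObsFactor (Φ : ι → ℂ) (p : ι → ℂ × ℂ) (w : μ → ℂ × ℂ) (k : ℂ)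
    (a b : μ → ℂ) : Matrix ι (Fin 3 × μ) ℂ :=
  of fun j x =>
    Φ j * (exp (-I * k * cdot (p j) (w x.2)) * ![a x.2, b x.2 * (p j).1, b x.2 * (p j).2] x.1)

noncomputable def msrIncFactor (Φ : κ → ℂ) (q : κ → ℂ × ℂ) (w : μ → ℂ × ℂ) (k : ℂ) :
    Matrix κ (Fin 3 × μ) ℂ :=
  of fun l x => Φ l * (exp (I * k * cdot (q l) (w x.2)) * ![1, (q l).1, (q l).2] x.1)

theorem msr_matrix_eq_mul_transpose (Φobs : ι → ℂ) (Φinc : κ → ℂ) (p : ι → ℂ × ℂ)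
    (q : κ → ℂ × ℂ) (w : μ → ℂ × ℂ) (k : ℂ) (a b : μ → ℂ) :
    (of fun j l => Φobs j * Φinc l *
        ∑ m, (a m + b m * cdot (p j) (q l)) * exp (-I * k * cdot (p j - q l) (w m))
      : Matrix ι κ ℂ) =
      msrObsFactor Φobs p w k a b * (msrIncFactor Φinc q w k)ᵀ := by
  ext j l
  simp only [of_apply, mul_apply, transpose_apply, msrObsFactor, msrIncFactor,
    Fintype.sum_prod_type_right, msr_summand_eq_sum, Finset.mul_sum]
  refine Finset.sum_congr rfl fun m _ => Finset.sum_congr rfl fun i _ => ?_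
  ring

end Factorization

theorem msr_rank_le_general
    (M Nobs Ninc : ℕ)
    (z : Fin M → ℝ × ℝ) (km : ℝ)
    (Φobs : Fin Nobs → ℂ) (Φinc : Fin Ninc → ℂ)
    (p : Fin Nobs → ℂ × ℂ) (q : Fin Ninc → ℂ × ℂ)
    (a b : Fin M → ℂ) :
    (∀ (K : Matrix (Fin Nobs) (Fin Ninc) ℂ)
        (D : Matrix (Fin Nobs) (Fin (3 * M)) ℂ)
        (E : Matrix (Fin (3 * M)) (Fin (3 * M)) ℂ)
        (H : Matrix (Fin Ninc) (Fin (3 * M)) ℂ),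
        K = D * E * Hᵀ → K.rank ≤ 3 * M) ∧
    (Matrix.of fun j l =>
        Φobs j * Φinc l *
          ∑ m : Fin M, (a m + b m * cdot (p j) (q l)) *
            Complex.exp (-Complex.I * km * cdot (p j - q l) (toC2 (z m)))
      : Matrix (Fin Nobs) (Fin Ninc) ℂ).rank ≤ 3 * M := by
  constructor
  · rintro K D E H rfl
    simpa using (D * E).rank_mul_le_card_inner Hᵀ
  · rw [msr_matrix_eq_mul_transpose]
    simpa using (msrObsFactor Φobs p (fun m => toC2 (z m)) km a b).rank_mul_le_card_inner _

/-- **Rank bound for the MSR matrix.**  If `K = D * E * Hᵀ` with `D : Nobs × 3M`,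
`E : 3M × 3M` and `H : Ninc × 3M`, then `rank K ≤ 3M`; in particular the MSR matrix with
entries `K j l = Φobs j * Φinc l * ∑ m, (a m + b m * (p j ⋅ q l)) * exp (-i k₋ (p j - q l) ⋅ z m)`
has rank at most `3M` (hence at most `3M` nonzero singular values). -/
theorem msr_rank_le
    (M Nobs Ninc : ℕ) (hM : 0 < M) (hNobs : 0 < Nobs) (hNinc : 0 < Ninc)
    (z : Fin M → ℝ × ℝ) (km : ℝ) (hkm : 0 < km)
    (Φobs : Fin Nobs → ℂ) (Φinc : Fin Ninc → ℂ)
    (p : Fin Nobs → ℂ × ℂ) (q : Fin Ninc → ℂ × ℂ)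
    (a b : Fin M → ℂ) :
    (∀ (K : Matrix (Fin Nobs) (Fin Ninc) ℂ)
        (D : Matrix (Fin Nobs) (Fin (3 * M)) ℂ)
        (E : Matrix (Fin (3 * M)) (Fin (3 * M)) ℂ)
        (H : Matrix (Fin Ninc) (Fin (3 * M)) ℂ),
        K = D * E * Hᵀ → K.rank ≤ 3 * M) ∧
    (Matrix.of fun j l =>
        Φobs j * Φinc l *
          ∑ m : Fin M, (a m + b m * cdot (p j) (q l)) *
            Complex.exp (-Complex.I * km * cdot (p j - q l) (toC2 (z m)))
      : Matrix (Fin Nobs) (Fin Ninc) ℂ).rank ≤ 3 * M :=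
  msr_rank_le_general M Nobs Ninc z km Φobs Φinc p q a b
end
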